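/- For an extended metric space (X,d) and points x,x' ∈ X, the intrinsic distance d_ℓ(x,x') equals the infimum, over all real numbers a ≤ b and all continuous maps f : [a,b] → X with f(a) = x and f(b) = x', of the length of f, where the length of f is the supremum over all partitions a = t_0 ≤ t_1 ≤ … ≤ t_{n+1} = b of Σ_{i=0}^{n} d(f(t_i), f(t_{i+1})) (i.e. the total variation eVariationOn f (Icc a b)). -/

import Mathlib

/-!
A `1`-Lipschitz curve on `[0, ℓ]` has length at most `ℓ`. Conversely, a continuous curve of finite
length `L` can be reparametrized by arc length. Continuity of the curve makes its arc-length
function continuous, so by the intermediate value theorem it covers all of `[0, L]`, and the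
reparametrization is then a `1`-Lipschitz curve on `[0, L]` with the same endpoints.
-/

open ENNReal NNReal

/-- The intrinsic (length) extended distance associated to an extended metric:
the infimum of lengths `ℓ` of `1`-Lipschitz curves `[0, ℓ] → X` joining the two points. -/
noncomputable def intrinsicEDist {X : Type*} [EMetricSpace X] (x x' : X) : ℝ≥0∞ :=
  sInf {L : ℝ≥0∞ | ∃ ℓ : ℝ≥0, L = (ℓ : ℝ≥0∞) ∧ ∃ φ : ℝ → X,
    LipschitzOnWith 1 φ (Set.Icc 0 (ℓ : ℝ)) ∧ φ 0 = x ∧ φ (ℓ : ℝ) = x'}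

open Set Filter Topology

section Variation

variable {E : Type*} [PseudoEMetricSpace E]

theorem variationOnFromTo_eq_toReal_sub_toReal {α : Type*} [LinearOrder α] (f : α → E)
    (s : Set α) (a b : α) :
    variationOnFromTo f s a b =
      (eVariationOn f (s ∩ Icc a b)).toReal - (eVariationOn f (s ∩ Icc b a)).toReal := by
  have hzero : ∀ {c d : α}, c ≤ d → (eVariationOn f (s ∩ Icc d c)).toReal = 0 := fun hcd => by
    rw [eVariationOn.subsingleton f fun x hx y hy => by grind, ENNReal.toReal_zero]
  rcases le_total a b with hab | hba
  · rw [variationOnFromTo.eq_of_le f s hab, hzero hab, sub_zero]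
  · rw [variationOnFromTo.eq_of_ge f s hba, hzero hba, zero_sub]

theorem BoundedVariationOn.continuousOn_variationOnFromTo {α : Type*} [LinearOrder α]
    [TopologicalSpace α] [OrderTopology α] {f : α → E} {s : Set α} (hf : BoundedVariationOn f s)
    (hc : ContinuousOn f s) {a : α} (ha : a ∈ s) : ContinuousOn (variationOnFromTo f s a) s := by
  intro x hx
  have hsmall : Tendsto (variationOnFromTo f s x) (𝓝[s] x) (𝓝 0) := by
    have hright := (ENNReal.tendsto_toReal zero_ne_top).comp
      (hf.tendsto_eVariationOn_Icc_zero_right x ((hc x hx).mono inter_subset_left))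
    have hleft := (ENNReal.tendsto_toReal zero_ne_top).comp
      (hf.tendsto_eVariationOn_Icc_zero_left ((hc x hx).mono inter_subset_left))
    simpa [Function.comp_def, ← variationOnFromTo_eq_toReal_sub_toReal] using hright.sub hleft
  have hlim := hsmall.const_add (variationOnFromTo f s a x)
  rw [add_zero] at hlim
  refine hlim.congr' ?_
  filter_upwards [self_mem_nhdsWithin] with y hy
  exact variationOnFromTo.add hf.locallyBoundedVariationOn ha hx hy

theorem BoundedVariationOn.Icc_subset_image_variationOnFromTo {α : Type*}
    [ConditionallyCompleteLinearOrder α] [DenselyOrdered α] [TopologicalSpace α] [OrderTopology α]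
    {f : α → E} {a b : α} (hab : a ≤ b) (hf : BoundedVariationOn f (Icc a b))
    (hc : ContinuousOn f (Icc a b)) :
    Icc 0 (variationOnFromTo f (Icc a b) a b) ⊆ variationOnFromTo f (Icc a b) a '' Icc a b := by
  simpa [variationOnFromTo.self] using
    intermediate_value_Icc hab (hf.continuousOn_variationOnFromTo hc (left_mem_Icc.2 hab))

theorem HasConstantSpeedOnWith.lipschitzOnWith {f : ℝ → E} {s : Set ℝ} {l : ℝ≥0}
    (h : HasConstantSpeedOnWith f s l) : LipschitzOnWith l f s := by
  intro x hx y hy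
  wlog hxy : x ≤ y generalizing x y
  · rw [edist_comm, edist_comm x]
    exact this hy hx (le_of_not_ge hxy)
  calc edist (f x) (f y) ≤ eVariationOn f (s ∩ Icc x y) :=
        eVariationOn.edist_le f ⟨hx, le_rfl, hxy⟩ ⟨hy, hxy, le_rfl⟩
    _ = l * edist x y := by
        rw [h hx hy, ENNReal.ofReal_mul l.coe_nonneg, ENNReal.ofReal_coe_nnreal, edist_comm,
          edist_dist, Real.dist_eq, abs_of_nonneg (sub_nonneg.2 hxy)]

theorem LipschitzOnWith.eVariationOn_Icc_le {f : ℝ → E} {K : ℝ≥0} {a b : ℝ}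
    (h : LipschitzOnWith K f (Icc a b)) :
    eVariationOn f (Icc a b) ≤ K * ENNReal.ofReal (b - a) := by
  simpa using h.comp_eVariationOn_le (g := id) (mapsTo_id _)

end Variation

theorem BoundedVariationOn.exists_lipschitzOnWith_one_of_continuousOn {X : Type*} [EMetricSpace X]
    {f : ℝ → X} {a b : ℝ} (hab : a ≤ b) (hf : BoundedVariationOn f (Icc a b))
    (hc : ContinuousOn f (Icc a b)) :
    ∃ φ : ℝ → X, LipschitzOnWith 1 φ (Icc 0 (eVariationOn f (Icc a b)).toReal) ∧
      φ 0 = f a ∧ φ (eVariationOn f (Icc a b)).toReal = f b := by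
  have ha : a ∈ Icc a b := left_mem_Icc.2 hab
  have hb : b ∈ Icc a b := right_mem_Icc.2 hab
  have hlength : variationOnFromTo f (Icc a b) a b = (eVariationOn f (Icc a b)).toReal := by
    rw [variationOnFromTo.eq_of_le f _ hab, inter_self]
  have hend : ∀ t ∈ Icc a b,
      naturalParameterization f (Icc a b) a (variationOnFromTo f (Icc a b) a t) = f t :=
    fun t ht => edist_eq_zero.1 <|
      edist_naturalParameterization_eq_zero hf.locallyBoundedVariationOn ha ht
  refine ⟨naturalParameterization f (Icc a b) a, ?_, ?_, ?_⟩
  · rw [← hlength]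
    exact (has_unit_speed_naturalParameterization f hf.locallyBoundedVariationOn ha
      |>.lipschitzOnWith).mono (hf.Icc_subset_image_variationOnFromTo hab hc)
  · simpa [variationOnFromTo.self] using hend a ha
  · rw [← hlength]
    exact hend b hb

theorem intrinsicEDist_eq_iInf_length {X : Type*} [EMetricSpace X] (x x' : X) :
    intrinsicEDist x x' =
      sInf {L : ℝ≥0∞ | ∃ (a b : ℝ) (f : ℝ → X), a ≤ b ∧
        ContinuousOn f (Set.Icc a b) ∧ f a = x ∧ f b = x' ∧
        L = eVariationOn f (Set.Icc a b)} := by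
  apply le_antisymm
  · refine le_sInf ?_
    rintro _ ⟨a, b, f, hab, hc, rfl, rfl, rfl⟩
    by_cases hf : BoundedVariationOn f (Icc a b)
    · obtain ⟨φ, hφ, h0, h1⟩ := hf.exists_lipschitzOnWith_one_of_continuousOn hab hc
      exact sInf_le ⟨_, (ENNReal.coe_toNNReal hf).symm, φ, hφ, h0, h1⟩
    · rw [BoundedVariationOn, not_ne_iff] at hf
      exact hf ▸ le_top
  · refine le_sInf ?_
    rintro _ ⟨ℓ, rfl, φ, hφ, h0, h1⟩
    refine le_trans (sInf_le ⟨0, ℓ, φ, ℓ.coe_nonneg, hφ.continuousOn, h0, h1, rfl⟩) ?_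
    simpa using hφ.eVariationOn_Icc_le
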